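/- Let h > 0, a < 0, let V : (a, 0) → M₄(ℂ) be continuous, E ∈ ℝ, let ϕ : (a, 0) → ℝ be smooth, χ ∈ C_c^∞((a, 0), ℝ), and let u : (a, 0) → ℂ⁴ be smooth. Writing (P − E)g = −h² g'' + V g − E g, one has Re ∫_a^0 ⟨ e^{ϕ/h} ((P − E)(χ u))(x), e^{ϕ(x)/h} χ(x) u(x) ⟩ dx = Re ∫_a^0 ⟨ e^{ϕ(x)/h} χ(x) ((P − E)u)(x), e^{ϕ(x)/h} χ(x) u(x) ⟩ dx + h² ∫_a^0 e^{2ϕ(x)/h} ( 2 (ϕ'(x)/h) χ(x) χ'(x) + χ'(x)² ) ‖u(x)‖² dx. -/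

import Mathlib

open MeasureTheory Set Matrix

/-- The standard Hermitian inner product `⟨u,v⟩ = ∑ uⱼ v̄ⱼ` on `ℂ⁴`. -/
noncomputable def hermInner (u v : Fin 4 → ℂ) : ℂ :=
  ∑ j, u j * (starRingEnd ℂ) (v j)

/-- The squared Hermitian norm `‖u‖² = ∑ |uⱼ|²` on `ℂ⁴`. -/
noncomputable def nsq (u : Fin 4 → ℂ) : ℝ :=
  ∑ j, Complex.normSq (u j)

/-- The operator `(P − E)g = −h²g'' + Vg − Eg`. -/
noncomputable def PE (h : ℝ) (V : ℝ → Matrix (Fin 4) (Fin 4) ℂ) (E : ℝ)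
    (g : ℝ → Fin 4 → ℂ) (x : ℝ) : Fin 4 → ℂ :=
  (-(h^2 : ℂ)) • deriv (deriv g) x + V x *ᵥ g x - ((E : ℝ) : ℂ) • g x

lemma hermInner_smul_left (a : ℂ) (u v : Fin 4 → ℂ) :
    hermInner (a • u) v = a * hermInner u v := by
  simp [hermInner, Finset.mul_sum, mul_assoc]

lemma hermInner_smul_right (a : ℂ) (u v : Fin 4 → ℂ) :
    hermInner u (a • v) = (starRingEnd ℂ) a * hermInner u v := by
  simp only [hermInner, Pi.smul_apply, smul_eq_mul, Finset.mul_sum]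
  exact Finset.sum_congr rfl (fun i _ => by rw [RingHom.map_mul]; ring)

lemma hermInner_add_left (u w v : Fin 4 → ℂ) :
    hermInner (u + w) v = hermInner u v + hermInner w v := by
  simp [hermInner, add_mul, Finset.sum_add_distrib]

lemma hermInner_sub_left (u w v : Fin 4 → ℂ) :
    hermInner (u - w) v = hermInner u v - hermInner w v := by
  simp [hermInner, sub_mul, Finset.sum_sub_distrib]

lemma hermInner_zero_right (v : Fin 4 → ℂ) : hermInner v 0 = 0 := by
  simp [hermInner]

lemma hermInner_self (u : Fin 4 → ℂ) : hermInner u u = (nsq u : ℂ) := by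
  simp [hermInner, nsq, Complex.mul_conj]

lemma hasDerivAt_comp_proj {f : ℝ → Fin 4 → ℂ} {f' : Fin 4 → ℂ} {x : ℝ}
    (hf : HasDerivAt f f' x) (j : Fin 4) :
    HasDerivAt (fun y => f y j) (f' j) x :=
  ((ContinuousLinearMap.proj j : (Fin 4 → ℂ) →L[ℝ] ℂ).hasFDerivAt.comp_hasDerivAt x hf)

lemma hasDerivAt_nsq {f : ℝ → Fin 4 → ℂ} {f' : Fin 4 → ℂ} {x : ℝ}
    (hf : HasDerivAt f f' x) :
    HasDerivAt (fun y => nsq (f y)) (2 * (hermInner f' (f x)).re) x := by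
  have hcomp : ∀ j : Fin 4, HasDerivAt (fun y => Complex.normSq (f y j))
      (2 * (f' j * (starRingEnd ℂ) (f x j)).re) x := by
    intro j
    have hj := hasDerivAt_comp_proj hf j
    have hre : HasDerivAt (fun y => (f y j).re) ((f' j).re) x :=
      Complex.reCLM.hasFDerivAt.comp_hasDerivAt x hj
    have him : HasDerivAt (fun y => (f y j).im) ((f' j).im) x :=
      Complex.imCLM.hasFDerivAt.comp_hasDerivAt x hj
    have := (hre.fun_mul hre).fun_add (him.fun_mul him)
    have heq : (fun y => (f y j).re * (f y j).re + (f y j).im * (f y j).im)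
        = fun y => Complex.normSq (f y j) := by
      funext y; simp [Complex.normSq_apply]
    rw [heq] at this
    refine this.congr_deriv ?_
    simp [Complex.mul_re, Complex.conj_re, Complex.conj_im]; ring
  have hsum : HasDerivAt (fun y => ∑ j : Fin 4, Complex.normSq (f y j))
      (∑ j : Fin 4, 2 * (f' j * (starRingEnd ℂ) (f x j)).re) x :=
    HasDerivAt.fun_sum (fun j _ => hcomp j)
  have : (fun y => ∑ j : Fin 4, Complex.normSq (f y j)) = fun y => nsq (f y) := by
    funext y; simp [nsq]
  rw [this] at hsum
  convert hsum using 1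
  simp [hermInner, Complex.re_sum, Finset.mul_sum]

lemma continuousOn_hermInner_comp {f g : ℝ → Fin 4 → ℂ} {s : Set ℝ}
    (hf : ContinuousOn f s) (hg : ContinuousOn g s) :
    ContinuousOn (fun x => hermInner (f x) (g x)) s := by
  unfold hermInner
  exact continuousOn_finset_sum _ fun j _ =>
    ((continuous_apply j).comp_continuousOn hf).mul
      (Complex.continuous_conj.comp_continuousOn ((continuous_apply j).comp_continuousOn hg))

lemma continuousOn_nsq_comp {f : ℝ → Fin 4 → ℂ} {s : Set ℝ}
    (hf : ContinuousOn f s) : ContinuousOn (fun x => nsq (f x)) s := by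
  unfold nsq
  exact continuousOn_finset_sum _ fun j _ =>
    Complex.continuous_normSq.comp_continuousOn ((continuous_apply j).comp_continuousOn hf)

lemma integrableOn_aux {EE : Type*} [NormedAddCommGroup EE] {f : ℝ → EE} {s K : Set ℝ}
    (hsM : MeasurableSet s) (hKc : IsCompact K) (hKcl : IsClosed K) (hKs : K ⊆ s)
    (hf : ContinuousOn f s) (h0 : ∀ x ∈ s \ K, f x = 0) : IntegrableOn f s := by
  have h1 : IntegrableOn f K := (hf.mono hKs).integrableOn_compact hKc
  have h2 : IntegrableOn f (s \ K) := by
    rw [integrableOn_congr_fun h0 (hsM.diff hKcl.measurableSet)]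
    exact integrableOn_zero
  exact (h1.union h2).mono_set fun x hx => by
    by_cases hxK : x ∈ K
    · exact Or.inl hxK
    · exact Or.inr ⟨hx, hxK⟩

set_option maxHeartbeats 2000000 in
/-- The commutator identity:
`Re ∫ ⟨e^{ϕ/h}(P−E)(χu), e^{ϕ/h}χu⟩`
`= Re ∫ ⟨e^{ϕ/h}χ(P−E)u, e^{ϕ/h}χu⟩`
`  + h² ∫ e^{2ϕ/h}(2(ϕ'/h)χχ' + χ'²)‖u‖²`. -/
theorem stmt_14 (h : ℝ) (hh : 0 < h) (a : ℝ) (ha : a < 0)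
    (V : ℝ → Matrix (Fin 4) (Fin 4) ℂ) (hV : ContinuousOn V (Set.Ioo a 0))
    (E : ℝ)
    (ϕ : ℝ → ℝ) (hϕ : ContDiffOn ℝ (⊤ : ℕ∞) ϕ (Set.Ioo a 0))
    (χ : ℝ → ℝ) (hχ : ContDiff ℝ (⊤ : ℕ∞) χ)
    (hχc : HasCompactSupport χ) (hχs : tsupport χ ⊆ Set.Ioo a 0)
    (u : ℝ → Fin 4 → ℂ) (hu : ContDiffOn ℝ (⊤ : ℕ∞) u (Set.Ioo a 0)) :
    (∫ x in Set.Ioo a 0,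
        hermInner
          (((Real.exp (ϕ x / h) : ℝ) : ℂ) •
            PE h V E (fun y => ((χ y : ℝ) : ℂ) • u y) x)
          (((Real.exp (ϕ x / h) : ℝ) : ℂ) • (((χ x : ℝ) : ℂ) • u x))).re
      = (∫ x in Set.Ioo a 0,
          hermInner
            (((Real.exp (ϕ x / h) : ℝ) : ℂ) • (((χ x : ℝ) : ℂ) • PE h V E u x))
            (((Real.exp (ϕ x / h) : ℝ) : ℂ) • (((χ x : ℝ) : ℂ) • u x))).re
        + h^2 * ∫ x in Set.Ioo a 0,
            Real.exp (2 * ϕ x / h) *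
              (2 * (deriv ϕ x / h) * χ x * deriv χ x + (deriv χ x)^2) *
              nsq (u x) := by
  have hsO : IsOpen (Set.Ioo a (0:ℝ)) := isOpen_Ioo
  have hsM : MeasurableSet (Set.Ioo a (0:ℝ)) := measurableSet_Ioo
  have hKc : IsCompact (tsupport χ) := hχc
  have hKcl : IsClosed (tsupport χ) := isClosed_tsupport χ
  have hKs : tsupport χ ⊆ Set.Ioo a 0 := hχs
  -- derivative facts for χ
  have hχd : ∀ x : ℝ, HasDerivAt χ (deriv χ x) x := fun x =>
    ((hχ.differentiable (by simp)) x).hasDerivAt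
  have hχ'C : ContDiff ℝ (⊤ : ℕ∞) (deriv χ) :=
    (contDiff_infty_iff_deriv.mp (hχ.of_le (by simp))).2
  have hχ'd : ∀ x : ℝ, HasDerivAt (deriv χ) (deriv (deriv χ) x) x := fun x =>
    ((hχ'C.differentiable (by simp)) x).hasDerivAt
  have hχ0 : ∀ x ∉ tsupport χ, χ x = 0 := fun x hx =>
    image_eq_zero_of_notMem_tsupport hx
  have hχ'0 : ∀ x ∉ tsupport χ, deriv χ x = 0 := by
    intro x hx
    have hev : χ =ᶠ[nhds x] (fun _ => 0) :=
      Filter.eventually_of_mem (hKcl.isOpen_compl.mem_nhds hx)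
        (fun y hy => hχ0 y hy)
    rw [hev.deriv_eq]
    simp
  -- derivative facts for ϕ
  have hϕd : ∀ x ∈ Set.Ioo a (0:ℝ), HasDerivAt ϕ (deriv ϕ x) x := fun x hx =>
    (((hϕ.differentiableOn (by simp)) x hx).differentiableAt (hsO.mem_nhds hx)).hasDerivAt
  have hϕc : ContinuousOn ϕ (Set.Ioo a 0) := hϕ.continuousOn
  have hϕ'c : ContinuousOn (deriv ϕ) (Set.Ioo a 0) :=
    hϕ.continuousOn_deriv_of_isOpen hsO (by simp)
  -- derivative facts for u
  have hud : ∀ x ∈ Set.Ioo a (0:ℝ), HasDerivAt u (deriv u x) x := fun x hx =>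
    (((hu.differentiableOn (by simp)) x hx).differentiableAt (hsO.mem_nhds hx)).hasDerivAt
  have hu'C : ContDiffOn ℝ (⊤ : ℕ∞) (deriv u) (Set.Ioo a 0) :=
    hu.deriv_of_isOpen hsO (by simp)
  have hu'd : ∀ x ∈ Set.Ioo a (0:ℝ), HasDerivAt (deriv u) (deriv (deriv u) x) x :=
    fun x hx =>
    (((hu'C.differentiableOn (by simp)) x hx).differentiableAt (hsO.mem_nhds hx)).hasDerivAt
  have huc : ContinuousOn u (Set.Ioo a 0) := hu.continuousOn
  have hu'c : ContinuousOn (deriv u) (Set.Ioo a 0) := hu'C.continuousOn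
  have hu''c : ContinuousOn (deriv (deriv u)) (Set.Ioo a 0) :=
    hu'C.continuousOn_deriv_of_isOpen hsO (by exact_mod_cast le_top)
  -- second derivative of χ • u
  have hcud : ∀ x ∈ Set.Ioo a (0:ℝ), HasDerivAt (fun y => ((χ y : ℝ) : ℂ) • u y)
      (((χ x : ℝ) : ℂ) • deriv u x + ((deriv χ x : ℝ) : ℂ) • u x) x := fun x hx =>
    ((hχd x).ofReal_comp).smul (hud x hx)
  have hcu2 : ∀ x ∈ Set.Ioo a (0:ℝ),
      deriv (deriv (fun y => ((χ y : ℝ) : ℂ) • u y)) x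
      = ((χ x : ℝ) : ℂ) • deriv (deriv u) x
        + ((2 * deriv χ x : ℝ) : ℂ) • deriv u x
        + ((deriv (deriv χ) x : ℝ) : ℂ) • u x := by
    intro x hx
    have hev : deriv (fun y => ((χ y : ℝ) : ℂ) • u y) =ᶠ[nhds x]
        (fun y => ((χ y : ℝ) : ℂ) • deriv u y + ((deriv χ y : ℝ) : ℂ) • u y) := by
      filter_upwards [hsO.mem_nhds hx] with y hy
      exact (hcud y hy).deriv
    rw [hev.deriv_eq]
    have h1 : HasDerivAt (fun y => ((χ y : ℝ) : ℂ) • deriv u y)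
        (((χ x : ℝ) : ℂ) • deriv (deriv u) x + ((deriv χ x : ℝ) : ℂ) • deriv u x) x :=
      ((hχd x).ofReal_comp).smul (hu'd x hx)
    have h2 : HasDerivAt (fun y => ((deriv χ y : ℝ) : ℂ) • u y)
        (((deriv χ x : ℝ) : ℂ) • deriv u x + ((deriv (deriv χ) x : ℝ) : ℂ) • u x) x :=
      ((hχ'd x).ofReal_comp).smul (hud x hx)
    rw [(h1.fun_add h2).deriv]
    push_cast
    module
  -- the commutator term
  set d1 : ℝ → ℝ := fun x =>
    Real.exp (ϕ x / h) * Real.exp (ϕ x / h) * (-(h ^ 2)) * (2 * χ x * deriv χ x) with hd1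
  set d2 : ℝ → ℝ := fun x =>
    Real.exp (ϕ x / h) * Real.exp (ϕ x / h) * (-(h ^ 2)) *
      (χ x * deriv (deriv χ) x * nsq (u x)) with hd2
  set D : ℝ → ℂ := fun x =>
    ((d1 x : ℝ) : ℂ) * hermInner (deriv u x) (u x) + ((d2 x : ℝ) : ℂ) with hDdef
  have step1 : ∀ x ∈ Set.Ioo a (0:ℝ),
      hermInner (((Real.exp (ϕ x / h) : ℝ) : ℂ) •
          PE h V E (fun y => ((χ y : ℝ) : ℂ) • u y) x)
        (((Real.exp (ϕ x / h) : ℝ) : ℂ) • (((χ x : ℝ) : ℂ) • u x))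
      = hermInner (((Real.exp (ϕ x / h) : ℝ) : ℂ) • (((χ x : ℝ) : ℂ) • PE h V E u x))
          (((Real.exp (ϕ x / h) : ℝ) : ℂ) • (((χ x : ℝ) : ℂ) • u x)) + D x := by
    intro x hx
    have hPE : PE h V E (fun y => ((χ y : ℝ) : ℂ) • u y) x
        = ((χ x : ℝ) : ℂ) • PE h V E u x
          + (-(h ^ 2 : ℂ)) • (((2 * deriv χ x : ℝ) : ℂ) • deriv u x
            + ((deriv (deriv χ) x : ℝ) : ℂ) • u x) := by
      simp only [PE]
      rw [hcu2 x hx, Matrix.mulVec_smul]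
      module
    rw [hPE, hDdef, hd1, hd2]
    simp only [smul_add, hermInner_add_left, hermInner_smul_left, hermInner_smul_right,
      Complex.conj_ofReal, hermInner_self]
    push_cast
    ring
  -- the boundary-term function F and its derivative G
  set F : ℝ → ℝ := fun x =>
    -(h ^ 2) * (Real.exp (2 * ϕ x / h) * (χ x * deriv χ x * nsq (u x))) with hFdef
  set G : ℝ → ℝ := fun x =>
    -(h ^ 2) * (Real.exp (2 * ϕ x / h) * (2 * deriv ϕ x / h) * (χ x * deriv χ x * nsq (u x))
      + Real.exp (2 * ϕ x / h) *
        ((deriv χ x * deriv χ x + χ x * deriv (deriv χ) x) * nsq (u x)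
          + χ x * deriv χ x * (2 * (hermInner (deriv u x) (u x)).re))) with hGdef
  have hFd : ∀ x ∈ Set.Ioo a (0:ℝ), HasDerivAt F (G x) x := by
    intro x hx
    have he2 : HasDerivAt (fun y => Real.exp (2 * ϕ y / h))
        (Real.exp (2 * ϕ x / h) * (2 * deriv ϕ x / h)) x :=
      ((HasDerivAt.const_mul 2 (hϕd x hx)).div_const h).exp
    have hprod : HasDerivAt (fun y => χ y * deriv χ y * nsq (u y))
        ((deriv χ x * deriv χ x + χ x * deriv (deriv χ) x) * nsq (u x)
          + χ x * deriv χ x * (2 * (hermInner (deriv u x) (u x)).re)) x :=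
      ((hχd x).mul (hχ'd x)).mul (hasDerivAt_nsq (hud x hx))
    have hmain := HasDerivAt.const_mul (-(h ^ 2)) (he2.mul hprod)
    rw [hFdef, hGdef]
    exact hmain
  have hFderiv : ∀ x ∈ Set.Ioo a (0:ℝ), deriv F x = G x := fun x hx => (hFd x hx).deriv
  have step2 : ∀ x ∈ Set.Ioo a (0:ℝ), (D x).re
      = h ^ 2 * (Real.exp (2 * ϕ x / h) *
          (2 * (deriv ϕ x / h) * χ x * deriv χ x + (deriv χ x)^2) * nsq (u x))
        + deriv F x := by
    intro x hx
    rw [hFderiv x hx, hDdef, hGdef, hd1, hd2]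
    simp only [Complex.add_re, Complex.re_ofReal_mul, Complex.ofReal_re]
    have hexp : Real.exp (2 * ϕ x / h) = Real.exp (ϕ x / h) * Real.exp (ϕ x / h) := by
      rw [← Real.exp_add]; ring_nf
    rw [hexp]; ring
  -- continuity facts
  have hec : ContinuousOn (fun x => ((Real.exp (ϕ x / h) : ℝ) : ℂ)) (Set.Ioo a 0) :=
    Complex.continuous_ofReal.comp_continuousOn
      (Real.continuous_exp.comp_continuousOn (hϕc.div_const h))
  have hχcC : Continuous fun x => ((χ x : ℝ) : ℂ) :=
    Complex.continuous_ofReal.comp hχ.continuous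
  have hχ'cont : Continuous (deriv χ) := hχ'C.continuous
  have hχ''cont : Continuous (deriv (deriv χ)) :=
    ((contDiff_infty_iff_deriv.mp hχ'C).2).continuous
  have hVu : ContinuousOn (fun x => V x *ᵥ u x) (Set.Ioo a 0) := by
    apply continuousOn_pi.mpr; intro j
    simp only [Matrix.mulVec, dotProduct]
    apply continuousOn_finset_sum
    intro k _
    have h1 : Continuous (fun m : Matrix (Fin 4) (Fin 4) ℂ => m j k) :=
      (continuous_apply k).comp (continuous_apply j)
    have h2 : ContinuousOn (fun x => V x j k) (Set.Ioo a 0) := h1.comp_continuousOn hV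
    have h3 : ContinuousOn (fun x => u x k) (Set.Ioo a 0) :=
      (continuous_apply k).comp_continuousOn huc
    exact h2.mul h3
  have hPEuC : ContinuousOn (fun x => PE h V E u x) (Set.Ioo a 0) := by
    simp only [PE]
    exact ((continuousOn_const.fun_smul hu''c).fun_add hVu).fun_sub (continuousOn_const.fun_smul huc)
  have hHermC : ContinuousOn (fun x => hermInner (deriv u x) (u x)) (Set.Ioo a 0) :=
    continuousOn_hermInner_comp hu'c huc
  have hNuC : ContinuousOn (fun x => nsq (u x)) (Set.Ioo a 0) := continuousOn_nsq_comp huc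
  have hχcont : Continuous χ := hχ.continuous
  have hϕhC : ContinuousOn (fun x => Real.exp (ϕ x / h)) (Set.Ioo a 0) :=
    Real.continuous_exp.comp_continuousOn (hϕc.div_const h)
  have hϕ2C : ContinuousOn (fun x => Real.exp (2 * ϕ x / h)) (Set.Ioo a 0) :=
    Real.continuous_exp.comp_continuousOn ((continuousOn_const.mul hϕc).div_const h)
  -- integrability of the three pieces
  have hMint : IntegrableOn (fun x =>
      hermInner (((Real.exp (ϕ x / h) : ℝ) : ℂ) • (((χ x : ℝ) : ℂ) • PE h V E u x))
        (((Real.exp (ϕ x / h) : ℝ) : ℂ) • (((χ x : ℝ) : ℂ) • u x))) (Set.Ioo a 0) := by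
    apply integrableOn_aux hsM hKc hKcl hKs
    · exact continuousOn_hermInner_comp (hec.smul (hχcC.continuousOn.smul hPEuC))
        (hec.smul (hχcC.continuousOn.smul huc))
    · intro x hx
      simp [hχ0 x hx.2, hermInner_zero_right]
  have hDint : IntegrableOn D (Set.Ioo a 0) := by
    apply integrableOn_aux hsM hKc hKcl hKs
    · rw [hDdef]
      simp only [hd1, hd2]
      apply ContinuousOn.add
      · exact (Complex.continuous_ofReal.comp_continuousOn
          (((hϕhC.mul hϕhC).mul continuousOn_const).mul
            ((continuousOn_const.mul hχcont.continuousOn).mul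
              hχ'cont.continuousOn))).mul hHermC
      · exact Complex.continuous_ofReal.comp_continuousOn
          (((hϕhC.mul hϕhC).mul continuousOn_const).mul
            ((hχcont.continuousOn.mul hχ''cont.continuousOn).mul hNuC))
    · intro x hx
      simp [hDdef, hd1, hd2, hχ0 x hx.2]
  have hXint : IntegrableOn (fun x =>
      Real.exp (2 * ϕ x / h) *
        (2 * (deriv ϕ x / h) * χ x * deriv χ x + (deriv χ x)^2) *
        nsq (u x)) (Set.Ioo a 0) := by
    apply integrableOn_aux hsM hKc hKcl hKs
    · exact (hϕ2C.mul
        ((((continuousOn_const.mul (hϕ'c.div_const h)).mul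
          hχcont.continuousOn).mul hχ'cont.continuousOn).add
          (hχ'cont.continuousOn.pow 2))).mul hNuC
    · intro x hx
      simp [hχ0 x hx.2, hχ'0 x hx.2]
  have hF'0 : ∀ x ∉ tsupport χ, deriv F x = 0 := by
    intro x hx
    have hev : F =ᶠ[nhds x] (fun _ => 0) := by
      filter_upwards [hKcl.isOpen_compl.mem_nhds hx] with y hy
      simp [hFdef, hχ0 y hy]
    rw [hev.deriv_eq]
    simp
  have hGC : ContinuousOn G (Set.Ioo a 0) := by
    rw [hGdef]
    apply continuousOn_const.mul
    apply ContinuousOn.add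
    · exact (hϕ2C.mul ((continuousOn_const.mul hϕ'c).div_const h)).mul
        ((hχcont.continuousOn.mul hχ'cont.continuousOn).mul hNuC)
    · exact hϕ2C.mul
        ((((hχ'cont.continuousOn.mul hχ'cont.continuousOn).add
          (hχcont.continuousOn.mul hχ''cont.continuousOn)).mul hNuC).add
          ((hχcont.continuousOn.mul hχ'cont.continuousOn).mul
            (continuousOn_const.mul (Complex.continuous_re.comp_continuousOn hHermC))))
  have hF'C : ContinuousOn (deriv F) (Set.Ioo a 0) := hGC.congr hFderiv
  have hF'int : IntegrableOn (deriv F) (Set.Ioo a 0) :=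
    integrableOn_aux hsM hKc hKcl hKs hF'C (fun x hx => hF'0 x hx.2)
  -- the integral of deriv F vanishes
  obtain ⟨c0, d0, hac0, hc0d0, hd00, hKio⟩ :
      ∃ c0 d0, a < c0 ∧ c0 < d0 ∧ d0 < 0 ∧ tsupport χ ⊆ Set.Ioo c0 d0 := by
    rcases (tsupport χ).eq_empty_or_nonempty with hKe | hKne
    · exact ⟨2*a/3, a/3, by linarith, by linarith, by linarith, by simp [hKe]⟩
    · have h1 := hKc.sInf_mem hKne
      have h2 := hKc.sSup_mem hKne
      have h3 := hKs h1
      have h4 := hKs h2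
      have h5 : sInf (tsupport χ) ≤ sSup (tsupport χ) :=
        csInf_le_csSup hKne hKc.bddBelow hKc.bddAbove
      refine ⟨(a + sInf (tsupport χ))/2, sSup (tsupport χ)/2,
        by linarith [h3.1], by linarith [h3.1, h4.2], by linarith [h4.2], ?_⟩
      intro x hxK
      have hi : sInf (tsupport χ) ≤ x := csInf_le hKc.bddBelow hxK
      have hs' : x ≤ sSup (tsupport χ) := le_csSup hKc.bddAbove hxK
      exact ⟨by linarith [h3.1], by linarith [h4.2]⟩
  have hIccs : Set.Icc c0 d0 ⊆ Set.Ioo a 0 := fun x hx =>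
    ⟨lt_of_lt_of_le hac0 hx.1, lt_of_le_of_lt hx.2 hd00⟩
  have hIoos : Set.Ioo c0 d0 ⊆ Set.Ioo a 0 := fun x hx => hIccs ⟨hx.1.le, hx.2.le⟩
  have intF : (∫ x in Set.Ioo a 0, deriv F x) = 0 := by
    have e1 : (∫ x in Set.Ioo a 0, deriv F x) = ∫ x in Set.Ioo c0 d0, deriv F x := by
      apply setIntegral_eq_of_subset_of_ae_diff_eq_zero hsM.nullMeasurableSet hIoos
      apply Filter.Eventually.of_forall
      intro x hx
      exact hF'0 x (fun hK => hx.2 (hKio hK))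
    have e2 : (∫ x in Set.Ioo c0 d0, deriv F x) = ∫ x in c0..d0, deriv F x := by
      rw [intervalIntegral.integral_of_le hc0d0.le, integral_Ioc_eq_integral_Ioo]
    have e3 : (∫ x in c0..d0, deriv F x) = F d0 - F c0 := by
      apply intervalIntegral.integral_eq_sub_of_hasDerivAt
      · intro x hx
        rw [Set.uIcc_of_le hc0d0.le] at hx
        have hxs := hIccs hx
        rw [hFderiv x hxs]
        exact hFd x hxs
      · apply ContinuousOn.intervalIntegrable
        rw [Set.uIcc_of_le hc0d0.le]
        exact hF'C.mono hIccs
    have hc0K : c0 ∉ tsupport χ := fun hK => (hKio hK).1.ne rfl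
    have hd0K : d0 ∉ tsupport χ := fun hK => (hKio hK).2.ne rfl
    have hFc0 : F c0 = 0 := by simp [hFdef, hχ0 c0 hc0K]
    have hFd0 : F d0 = 0 := by simp [hFdef, hχ0 d0 hd0K]
    rw [e1, e2, e3, hFc0, hFd0, sub_zero]
  -- assemble
  have e1 : (∫ x in Set.Ioo a 0,
      hermInner (((Real.exp (ϕ x / h) : ℝ) : ℂ) •
          PE h V E (fun y => ((χ y : ℝ) : ℂ) • u y) x)
        (((Real.exp (ϕ x / h) : ℝ) : ℂ) • (((χ x : ℝ) : ℂ) • u x)))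
      = ∫ x in Set.Ioo a 0,
        (hermInner (((Real.exp (ϕ x / h) : ℝ) : ℂ) • (((χ x : ℝ) : ℂ) • PE h V E u x))
          (((Real.exp (ϕ x / h) : ℝ) : ℂ) • (((χ x : ℝ) : ℂ) • u x)) + D x) :=
    setIntegral_congr_fun hsM step1
  rw [e1, integral_add hMint hDint, Complex.add_re]
  congr 1
  have e4 := integral_re hDint
  simp only [RCLike.re_to_complex] at e4
  rw [← e4]
  have e5 : (∫ x in Set.Ioo a 0, (D x).re)
      = ∫ x in Set.Ioo a 0,
        (h ^ 2 * (Real.exp (2 * ϕ x / h) *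
          (2 * (deriv ϕ x / h) * χ x * deriv χ x + (deriv χ x)^2) * nsq (u x))
          + deriv F x) :=
    setIntegral_congr_fun hsM step2
  rw [e5, integral_add (hXint.const_mul (h ^ 2)) hF'int, intF, add_zero,
    integral_const_mul]
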